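/- Fix $4\le r\le 7$, $d=9-r$. For two exceptional classes $e = -\tfrac1d K_r + x$ and $e' = -\tfrac1d K_r + \omega$ in $N_r$ (with $x\in W\omega$), the intersection index satisfies $(e,e') = \tfrac1d + (x,\omega)$; moreover $(e,e')=0$ if and only if $x$ and $\omega$ are adjacent vertices of $\mathrm{Conv}(W\omega)$, and $(e,e')>0$ for all other $x\neq\omega$. -/

import Mathlib

def NformR (r : ℕ) (x y : Fin (r + 1) → ℝ) : ℝ :=
  ∑ i : Fin (r + 1), if i = 0 then x i * y i else -(x i * y i)

def KvecR (r : ℕ) : Fin (r + 1) → ℝ := fun i => if i = 0 then -3 else 1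

def IsIntegralVec (r : ℕ) (x : Fin (r + 1) → ℝ) : Prop := ∀ i, ∃ n : ℤ, x i = n

/-- `x ∈ Wω` iff `-(1/d)K_r + x` is an exceptional class of the lattice `N_r`. -/
def WeightOrbit (r : ℕ) : Set (Fin (r + 1) → ℝ) :=
  {x | IsIntegralVec r ((-(1 / (9 - (r : ℝ)))) • KvecR r + x) ∧
    NformR r ((-(1 / (9 - (r : ℝ)))) • KvecR r + x)
      ((-(1 / (9 - (r : ℝ)))) • KvecR r + x) = -1 ∧
    NformR r ((-(1 / (9 - (r : ℝ)))) • KvecR r + x) (KvecR r) = -1}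

/-- The fundamental weight `ω` dual to `β_{r-1}`: the projection `ℓ_r + (1/d)K_r`. -/
noncomputable def omegaR (r : ℕ) : Fin (r + 1) → ℝ :=
  (fun i => if i = Fin.last r then 1 else 0) + (1 / (9 - (r : ℝ))) • KvecR r

/-- Adjacency of vertices of the polytope `Conv(O)`: the segment `[x,y]` is an
edge, i.e. an extreme subset, of `Conv(O)`. -/
def Adjacent (r : ℕ) (O : Set (Fin (r + 1) → ℝ)) (x y : Fin (r + 1) → ℝ) : Prop :=
  x ≠ y ∧ IsExtreme ℝ (convexHull ℝ O) (segment ℝ x y)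

/-! Write `e = -(1/d)K + x` and `ℓ = -(1/d)K + ω = E_r`, both exceptional classes of the lattice
`ℤ^{1,r}`. Since `(e, K) = -1` and `K² = d`, shifting by `K/d` turns `(e, ℓ)` into `1/d + (x, ω)`.
As `K^⊥` is negative definite for `r ≤ 8`, distinct exceptional classes satisfy `(e - f)² ≤ -2`,
i.e. `(e, f) ≥ 0`.

If `(e, ℓ) = 0`, the linear form `(·, x + ω)` attains its minimum on the orbit exactly at `x`
and `ω`, so `[x, ω]` is an edge. If `(e, ℓ) = m ≥ 1`, a case analysis on the degree of `e`
(at most `3` for `r ≤ 7`) gives an exceptional `f ⊥ ℓ` with `(e, f) = m - 1`. Then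
`g = e + ℓ - f` is exceptional and `g + f = e + ℓ`, so the midpoint of `[x, ω]` is also the
midpoint of a chord through a third point of the orbit; for an edge that point would lie on
`[x, ω]`, and an exceptional class on the segment between `e` and `ℓ` is one of its ends. -/

open Finset

section LorentzForm

variable {R : Type*} [CommRing R] {r : ℕ}

-- The form of `ℤ^{1,r}` in the basis `L, E_1, …, E_r`, so that `Pi.single 0 1 = L` and
-- `Pi.single i 1 = E_i`.
def lorentzForm (R : Type*) [CommRing R] (r : ℕ) : LinearMap.BilinForm R (Fin (r + 1) → R) :=
  Matrix.toLinearMap₂' R (Matrix.diagonal fun i => if i = 0 then 1 else -1)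

theorem lorentzForm_apply (x y : Fin (r + 1) → R) :
    lorentzForm R r x y = x 0 * y 0 - ∑ i ∈ univ.erase 0, x i * y i := by
  rw [lorentzForm, Matrix.toLinearMap₂'_apply', dotProduct, ← add_sum_erase _ _ (mem_univ 0),
    sub_eq_add_neg, ← sum_neg_distrib]
  simp only [Matrix.mulVec_diagonal, if_pos, one_mul]
  exact congrArg _ (sum_congr rfl fun i hi => by simp [ne_of_mem_erase hi])

theorem lorentzForm_comm (x y : Fin (r + 1) → R) : lorentzForm R r x y = lorentzForm R r y x := by
  simp only [lorentzForm_apply, mul_comm]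

theorem lorentzForm_single_right (x : Fin (r + 1) → R) (j : Fin (r + 1)) :
    lorentzForm R r x (Pi.single j 1) = if j = 0 then x 0 else -x j := by
  rw [lorentzForm_apply]
  split_ifs with hj
  · subst hj
    rw [sum_eq_zero fun i hi => by simp [ne_of_mem_erase hi]]
    simp
  · rw [sum_eq_single_of_mem j (mem_erase.2 ⟨hj, mem_univ j⟩) fun i _ hij => by simp [hij]]
    simp [Ne.symm hj]

theorem lorentzForm_single_left (x : Fin (r + 1) → R) (j : Fin (r + 1)) :
    lorentzForm R r (Pi.single j 1) x = if j = 0 then x 0 else -x j := by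
  rw [lorentzForm_comm, lorentzForm_single_right]

theorem lorentzForm_intCast (x y : Fin (r + 1) → ℤ) :
    lorentzForm ℝ r (Int.cast ∘ x) (Int.cast ∘ y) = lorentzForm ℤ r x y := by
  simp [lorentzForm_apply]

theorem NformR_eq (x y : Fin (r + 1) → ℝ) : NformR r x y = lorentzForm ℝ r x y := by
  rw [NformR, lorentzForm_apply, ← add_sum_erase _ _ (mem_univ 0), sub_eq_add_neg,
    ← sum_neg_distrib, if_pos rfl]
  exact congrArg _ (sum_congr rfl fun i hi => if_neg (ne_of_mem_erase hi))

end LorentzForm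

section Exceptional

variable {r : ℕ}

def canonicalClass (r : ℕ) : Fin (r + 1) → ℤ := fun i => if i = 0 then -3 else 1

theorem KvecR_eq : KvecR r = Int.cast ∘ canonicalClass r := by
  ext i
  simp [KvecR, canonicalClass, apply_ite (Int.cast : ℤ → ℝ)]

theorem lorentzForm_canonicalClass (x : Fin (r + 1) → ℤ) :
    lorentzForm ℤ r x (canonicalClass r) = -3 * x 0 - ∑ i ∈ univ.erase 0, x i := by
  rw [lorentzForm_apply, sum_congr rfl fun i hi => by
    rw [canonicalClass, if_neg (ne_of_mem_erase hi), mul_one]]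
  simp [canonicalClass, mul_comm]

theorem lorentzForm_canonicalClass_self :
    lorentzForm ℤ r (canonicalClass r) (canonicalClass r) = 9 - r := by
  rw [lorentzForm_canonicalClass,
    sum_congr rfl fun i hi => show canonicalClass r i = 1 from if_neg (ne_of_mem_erase hi)]
  simp [canonicalClass]

theorem lorentzForm_self_neg_of_canonicalClass_eq_zero (h8 : r ≤ 8) {v : Fin (r + 1) → ℤ}
    (hK : lorentzForm ℤ r v (canonicalClass r) = 0) (hv : v ≠ 0) : lorentzForm ℤ r v v < 0 := by
  rw [lorentzForm_canonicalClass] at hK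
  have hcs := sq_sum_le_card_mul_sum_sq (s := univ.erase (0 : Fin (r + 1))) (f := v)
  rw [card_erase_of_mem (mem_univ _), card_univ, Fintype.card_fin, add_tsub_cancel_right,
    show ∑ i ∈ univ.erase 0, v i = -3 * v 0 by linarith] at hcs
  have hsq : ∀ i ∈ univ.erase 0, 0 ≤ v i ^ 2 := fun i _ => sq_nonneg (v i)
  have h8' : (r : ℤ) ≤ 8 := by exact_mod_cast h8
  rw [lorentzForm_apply]
  by_contra! hnn
  simp only [← sq] at hnn
  have h0 : v 0 = 0 := by nlinarith [sum_nonneg hsq]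
  refine hv (funext fun i => ?_)
  by_cases hi : i = 0
  · rw [hi, h0, Pi.zero_apply]
  · have := (sum_eq_zero_iff_of_nonneg hsq).1 (by nlinarith [sum_nonneg hsq]) i
      (mem_erase.2 ⟨hi, mem_univ i⟩)
    exact pow_eq_zero_iff two_ne_zero |>.1 this

def IsExceptional (r : ℕ) (e : Fin (r + 1) → ℤ) : Prop :=
  lorentzForm ℤ r e e = -1 ∧ lorentzForm ℤ r e (canonicalClass r) = -1

theorem IsExceptional.lorentzForm_nonneg (h8 : r ≤ 8) {e f : Fin (r + 1) → ℤ}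
    (he : IsExceptional r e) (hf : IsExceptional r f) (hne : e ≠ f) : 0 ≤ lorentzForm ℤ r e f := by
  have hK : lorentzForm ℤ r (e - f) (canonicalClass r) = 0 := by
    rw [LinearMap.map_sub₂, he.2, hf.2, sub_self]
  have hsq : lorentzForm ℤ r (e - f) (e - f) = -2 - 2 * lorentzForm ℤ r e f := by
    simp only [map_sub, LinearMap.sub_apply, he.1, hf.1, lorentzForm_comm f e]
    ring
  have := lorentzForm_self_neg_of_canonicalClass_eq_zero h8 hK (sub_ne_zero.2 hne)
  omega

theorem isExceptional_single {j : Fin (r + 1)} (hj : j ≠ 0) : IsExceptional r (Pi.single j 1) := by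
  simp [IsExceptional, lorentzForm_single_left, hj, canonicalClass]

theorem isExceptional_line {i j : Fin (r + 1)} (hi : i ≠ 0) (hj : j ≠ 0) (hij : i ≠ j) :
    IsExceptional r (Pi.single 0 1 - Pi.single i 1 - Pi.single j 1) := by
  simp [IsExceptional, lorentzForm_single_left, hi, hj, hij, hij.symm, hi.symm, hj.symm,
    canonicalClass]

theorem IsExceptional.add_sub {e f f' : Fin (r + 1) → ℤ} (he : IsExceptional r e)
    (hf : IsExceptional r f) (hf' : IsExceptional r f') (hf'f : lorentzForm ℤ r f' f = 0)
    (hef' : lorentzForm ℤ r e f' = lorentzForm ℤ r e f - 1) : IsExceptional r (e + f - f') := by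
  constructor
  · simp only [map_add, map_sub, LinearMap.add_apply, LinearMap.sub_apply, he.1, hf.1, hf'.1,
      hf'f, hef', lorentzForm_comm f e, lorentzForm_comm f' e, lorentzForm_comm f f']
    ring
  · simp only [map_add, map_sub, LinearMap.add_apply, LinearMap.sub_apply, he.2, hf.2, hf'.2]
    ring

end Exceptional

section Combinatorics

variable {ι : Type*} {s : Finset ι} {b : ι → ℤ}

theorem sum_sub_mul_sub_sub_one (p : ℤ) :
    ∑ i ∈ s, (b i - p) * (b i - p - 1) =
      ∑ i ∈ s, b i ^ 2 - (2 * p + 1) * ∑ i ∈ s, b i + #s * (p * (p + 1)) := by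
  simp only [show ∀ i, (b i - p) * (b i - p - 1) = b i ^ 2 - (2 * p + 1) * b i + p * (p + 1)
    from fun i => by ring, sum_add_distrib, sum_sub_distrib, ← mul_sum, sum_const, nsmul_eq_mul]
  ring

theorem eq_or_eq_add_one_of_sum_sub_mul_sub_sub_one_nonpos {p : ℤ}
    (h : ∑ i ∈ s, (b i - p) * (b i - p - 1) ≤ 0) : ∀ i ∈ s, b i = p ∨ b i = p + 1 := by
  have hnn : ∀ i ∈ s, 0 ≤ (b i - p) * (b i - p - 1) := fun i _ => by
    rcases le_or_gt (b i) p with h | h <;> nlinarith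
  intro i hi
  have := (sum_eq_zero_iff_of_nonneg hnn).1 (le_antisymm h (sum_nonneg hnn)) i hi
  rcases mul_eq_zero.1 this with h | h <;> omega

theorem cases_of_sum_eq_of_sum_sq_eq (hs : #s ≤ 6) {a m : ℤ} (hm : 1 ≤ m)
    (hsum : ∑ i ∈ s, b i = 3 * a - 1 - m) (hsq : ∑ i ∈ s, b i ^ 2 = a ^ 2 + 1 - m ^ 2) :
    m = 1 ∧ (a = 1 ∨ a = 2 ∨ a = 3) ∨ m = 2 ∧ a = 3 := by
  have hcs := sq_sum_le_card_mul_sum_sq (s := s) (f := b)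
  have hs' : (#s : ℤ) ≤ 6 := by exact_mod_cast hs
  rw [hsum, hsq] at hcs
  have hpos : 0 ≤ a ^ 2 + 1 - m ^ 2 := hsq ▸ sum_nonneg fun i _ => sq_nonneg (b i)
  -- `(3a - 3 - 3m)^2 + 12 (m - 2) (m + 1) = 3 ((3a - 1 - m)^2 - 6 (a^2 + 1 - m^2)) ≤ 0`
  have key : (3 * a - 3 - 3 * m) ^ 2 + 12 * (m - 2) * (m + 1) ≤ 0 := by nlinarith
  have hm2 : m ≤ 2 := by nlinarith [sq_nonneg (3 * a - 3 - 3 * m)]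
  interval_cases m
  · left
    refine ⟨rfl, ?_⟩
    have : (a - 2) ^ 2 ≤ 2 := by nlinarith
    have : a ≤ 3 := by nlinarith
    have : 1 ≤ a := by nlinarith
    omega
  · right
    refine ⟨rfl, ?_⟩
    nlinarith [sq_nonneg (a - 3)]

theorem exists_eq_sub_one_or_exists_add_eq (hs2 : 2 ≤ #s) (hs6 : #s ≤ 6) {a m : ℤ} (hm : 1 ≤ m)
    (hsum : ∑ i ∈ s, b i = 3 * a - 1 - m) (hsq : ∑ i ∈ s, b i ^ 2 = a ^ 2 + 1 - m ^ 2) :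
    (∃ i ∈ s, b i = m - 1) ∨ ∃ i ∈ s, ∃ j ∈ s, i ≠ j ∧ b i + b j = a - m + 1 := by
  by_contra! ⟨h1, h2⟩
  obtain ⟨i₀, hi₀, j₀, hj₀, hij₀⟩ := one_lt_card.1 hs2
  have hs : (2 : ℤ) ≤ #s ∧ (#s : ℤ) ≤ 6 := ⟨by exact_mod_cast hs2, by exact_mod_cast hs6⟩
  have hQ := sum_sub_mul_sub_sub_one (s := s) (b := b)
  -- In each case `b` takes two consecutive values only, and the excluded patterns make it constant.
  have hconst : ∀ c, (∀ i ∈ s, b i = c) → #s * c = 3 * a - 1 - m := fun c hc => by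
    rw [← hsum, sum_eq_card_nsmul hc, nsmul_eq_mul]
  rcases cases_of_sum_eq_of_sum_sq_eq hs6 hm hsum hsq with ⟨rfl, rfl | rfl | rfl⟩ | ⟨rfl, rfl⟩
  · have hb := eq_or_eq_add_one_of_sum_sub_mul_sub_sub_one_nonpos (p := 0) (by rw [hQ]; linarith)
    have := hconst 1 fun i hi => (hb i hi).resolve_left (h1 i hi)
    omega
  · have hb := eq_or_eq_add_one_of_sum_sub_mul_sub_sub_one_nonpos (p := 0) (by rw [hQ]; linarith)
    have := (hb i₀ hi₀).resolve_left (h1 i₀ hi₀)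
    have := (hb j₀ hj₀).resolve_left (h1 j₀ hj₀)
    exact h2 i₀ hi₀ j₀ hj₀ hij₀ (by omega)
  · have hb := eq_or_eq_add_one_of_sum_sub_mul_sub_sub_one_nonpos (p := 1) (by rw [hQ]; linarith)
    have := hconst (b i₀) fun j hj => by
      by_cases hj₀ : j = i₀
      · rw [hj₀]
      · have := h2 j hj i₀ hi₀ hj₀
        rcases hb j hj with h | h <;> rcases hb i₀ hi₀ with h' | h' <;> omega
    rcases hb i₀ hi₀ with h | h <;> rw [h] at this <;> omega
  · have hb := eq_or_eq_add_one_of_sum_sub_mul_sub_sub_one_nonpos (p := 0) (by rw [hQ]; linarith)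
    have := hconst 0 fun i hi => (hb i hi).resolve_right (h1 i hi)
    omega

end Combinatorics

theorem exists_isExceptional_orthogonal_last {r : ℕ} (h4 : 4 ≤ r) (h7 : r ≤ 7)
    {e : Fin (r + 1) → ℤ} (he : IsExceptional r e)
    (hm : 1 ≤ lorentzForm ℤ r e (Pi.single (Fin.last r) 1)) :
    ∃ f, IsExceptional r f ∧ lorentzForm ℤ r f (Pi.single (Fin.last r) 1) = 0 ∧
      lorentzForm ℤ r e f = lorentzForm ℤ r e (Pi.single (Fin.last r) 1) - 1 := by
  have hl : Fin.last r ≠ 0 := by simp; omega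
  set T := (univ.erase (0 : Fin (r + 1))).erase (Fin.last r)
  have hT : ∀ i ∈ T, i ≠ 0 ∧ i ≠ Fin.last r := fun i hi =>
    ⟨ne_of_mem_erase (mem_of_mem_erase hi), ne_of_mem_erase hi⟩
  have hcard : #T = r - 1 := by simp [T, card_erase_of_mem, hl]
  have hsplit (g : Fin (r + 1) → ℤ) : ∑ i ∈ univ.erase 0, g i = g (Fin.last r) + ∑ i ∈ T, g i :=
    (add_sum_erase _ _ (mem_erase.2 ⟨hl, mem_univ _⟩)).symm
  have hsum : ∑ i ∈ T, -e i = 3 * e 0 - 1 - -e (Fin.last r) := by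
    have := he.2
    rw [lorentzForm_canonicalClass, hsplit] at this
    rw [sum_neg_distrib]
    linarith
  have hsq : ∑ i ∈ T, (-e i) ^ 2 = e 0 ^ 2 + 1 - (-e (Fin.last r)) ^ 2 := by
    have := he.1
    rw [lorentzForm_apply, hsplit] at this
    simp only [sq, neg_mul_neg] at this ⊢
    linarith
  rw [lorentzForm_single_right, if_neg hl] at hm ⊢
  rcases exists_eq_sub_one_or_exists_add_eq (by omega) (by omega) hm hsum hsq with
    ⟨i, hi, hbi⟩ | ⟨i, hi, j, hj, hij, hbij⟩
  · refine ⟨Pi.single i 1, isExceptional_single (hT i hi).1, ?_, ?_⟩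
    · simp [lorentzForm_single_left, (hT i hi).2, hl]
    · simp [lorentzForm_single_right, (hT i hi).1, hbi]
  · refine ⟨Pi.single 0 1 - Pi.single i 1 - Pi.single j 1,
      isExceptional_line (hT i hi).1 (hT j hj).1 hij, ?_, ?_⟩
    · simp [lorentzForm_single_left, (hT i hi).1, (hT j hj).1, (hT i hi).2, (hT j hj).2, hl]
    · simp [lorentzForm_single_right, (hT i hi).1, (hT j hj).1]
      omega

section Convex

variable {𝕜 E : Type*} [Field 𝕜] [LinearOrder 𝕜] [IsStrictOrderedRing 𝕜] [AddCommGroup E]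
  [Module 𝕜 E]

theorem Convex.union_setOf_lt {C : Set E} (hC : Convex 𝕜 C) {φ : E →ₗ[𝕜] 𝕜} {c : 𝕜}
    (hCφ : ∀ z ∈ C, φ z = c) : Convex 𝕜 ({z | c < φ z} ∪ C) := by
  have hge : ∀ y ∈ {z | c < φ z} ∪ C, c ≤ φ y := fun y hy => hy.elim le_of_lt fun h => (hCφ y h).ge
  rw [convex_iff_openSegment_subset]
  rintro p hp q hq z ⟨a, b, ha, hb, hab, rfl⟩
  by_cases hpq : p ∈ C ∧ q ∈ C
  · exact Or.inr (hC.openSegment_subset hpq.1 hpq.2 ⟨a, b, ha, hb, hab, rfl⟩)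
  have hlt : c < φ p ∨ c < φ q := by
    rcases hp with hp | hp
    · exact Or.inl hp
    rcases hq with hq | hq
    · exact Or.inr hq
    exact absurd ⟨hp, hq⟩ hpq
  left
  show c < φ (a • p + b • q)
  rw [map_add, map_smul, map_smul, smul_eq_mul, smul_eq_mul, ← one_mul c, ← hab]
  rcases hlt with h | h
  · nlinarith [mul_lt_mul_of_pos_left h ha, mul_le_mul_of_nonneg_left (hge q hq) hb.le]
  · nlinarith [mul_le_mul_of_nonneg_left (hge p hp) ha.le, mul_lt_mul_of_pos_left h hb]

theorem isExtreme_segment_of_lt {O : Set E} {x y : E} {φ : E →ₗ[𝕜] 𝕜} (hx : x ∈ O) (hy : y ∈ O)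
    (hxy : φ x = φ y) (hlt : ∀ z ∈ O, z ≠ x → z ≠ y → φ x < φ z) :
    IsExtreme 𝕜 (convexHull 𝕜 O) (segment 𝕜 x y) := by
  have hseg : ∀ z ∈ segment 𝕜 x y, φ z = φ x := by
    rintro _ ⟨a, b, -, -, hab, rfl⟩
    simp only [map_add, map_smul, smul_eq_mul, ← hxy]
    linear_combination φ x * hab
  have hhull : convexHull 𝕜 O ⊆ {z | φ x < φ z} ∪ segment 𝕜 x y := by
    refine convexHull_min (fun z hz => ?_) ((convex_segment x y).union_setOf_lt hseg)
    by_cases hzx : z = x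
    · exact Or.inr (hzx ▸ left_mem_segment 𝕜 x y)
    by_cases hzy : z = y
    · exact Or.inr (hzy ▸ right_mem_segment 𝕜 x y)
    exact Or.inl (hlt z hz hzx hzy)
  refine ⟨(convex_convexHull 𝕜 O).segment_subset (subset_convexHull 𝕜 O hx)
    (subset_convexHull 𝕜 O hy), ?_⟩
  rintro p hp q hq z hz ⟨a, b, ha, hb, hab, rfl⟩
  refine (hhull hp).resolve_left fun (hpφ : φ x < φ p) => ?_
  have hqφ : φ x ≤ φ q := (hhull hq).elim le_of_lt fun h => (hseg q h).ge
  have hzφ := hseg _ hz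
  rw [map_add, map_smul, map_smul, smul_eq_mul, smul_eq_mul] at hzφ
  have : a * (φ p - φ x) + b * (φ q - φ x) = 0 := by linear_combination hzφ - φ x * hab
  nlinarith [mul_pos ha (sub_pos.2 hpφ), mul_nonneg hb.le (sub_nonneg.2 hqφ)]

theorem IsExtreme.mem_segment_of_add_eq {A : Set E} {x y p q : E}
    (h : IsExtreme 𝕜 A (segment 𝕜 x y)) (hp : p ∈ A) (hq : q ∈ A) (hpq : p + q = x + y) :
    p ∈ segment 𝕜 x y := by
  have hmid : (2⁻¹ : 𝕜) • x + (2⁻¹ : 𝕜) • y = (2⁻¹ : 𝕜) • p + (2⁻¹ : 𝕜) • q := by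
    rw [← smul_add, ← smul_add, hpq]
  refine h.left_mem_of_mem_openSegment hp hq ⟨2⁻¹, 2⁻¹, by norm_num, by norm_num, by norm_num, rfl⟩
    ⟨2⁻¹, 2⁻¹, by norm_num, by norm_num, by norm_num, hmid.symm⟩

theorem eq_or_eq_of_mem_segment_of_apply_self_eq {B : LinearMap.BilinForm 𝕜 E} {c : 𝕜} {u v w : E}
    (hv : B v v = c) (hw : B w w = c) (hu : B u u = c) (hvw : B v w + B w v ≠ 2 * c)
    (h : u ∈ segment 𝕜 v w) : u = v ∨ u = w := by
  obtain ⟨a, b, ha, hb, hab, rfl⟩ := h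
  simp only [map_add, map_smul, LinearMap.add_apply, LinearMap.smul_apply, smul_eq_mul, hv,
    hw] at hu
  have : a * b * (B v w + B w v - 2 * c) = 0 := by linear_combination hu - c * (a + b + 1) * hab
  rcases mul_eq_zero.1 this with h | h
  · rcases mul_eq_zero.1 h with rfl | rfl
    · right
      simp [show b = 1 by linear_combination hab]
    · left
      simp [show a = 1 by linear_combination hab]
  · exact absurd (by linear_combination h) hvw

end Convex

section Weights

variable {r : ℕ}

noncomputable def weightOf (r : ℕ) (e : Fin (r + 1) → ℤ) : Fin (r + 1) → ℝ :=
  (1 / (9 - (r : ℝ))) • KvecR r + Int.cast ∘ e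

theorem neg_smul_add_weightOf (e : Fin (r + 1) → ℤ) :
    (-(1 / (9 - (r : ℝ)))) • KvecR r + weightOf r e = Int.cast ∘ e := by
  rw [weightOf, neg_smul, neg_add_cancel_left]

theorem weightOf_injective : Function.Injective (weightOf r) := fun _ _ h =>
  Int.cast_injective.comp_left (add_left_cancel h)

theorem mem_weightOrbit_iff {x : Fin (r + 1) → ℝ} :
    x ∈ WeightOrbit r ↔ ∃ e, IsExceptional r e ∧ weightOf r e = x := by
  constructor
  · rintro ⟨hint, hsq, hK⟩
    choose e he using hint
    have hx : (-(1 / (9 - (r : ℝ)))) • KvecR r + x = Int.cast ∘ e := funext he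
    rw [hx, NformR_eq, lorentzForm_intCast] at hsq
    rw [hx, NformR_eq, KvecR_eq, lorentzForm_intCast] at hK
    refine ⟨e, ⟨by exact_mod_cast hsq, by exact_mod_cast hK⟩, ?_⟩
    rw [weightOf, ← hx, neg_smul, add_neg_cancel_left]
  · rintro ⟨e, he, rfl⟩
    refine ⟨?_, ?_, ?_⟩ <;> rw [neg_smul_add_weightOf]
    · exact fun i => ⟨e i, rfl⟩
    · rw [NformR_eq, lorentzForm_intCast, he.1]
      norm_num
    · rw [NformR_eq, KvecR_eq, lorentzForm_intCast, he.2]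
      norm_num

theorem omegaR_eq : omegaR r = weightOf r (Pi.single (Fin.last r) 1) := by
  ext i
  simp [omegaR, weightOf, Pi.single_apply, add_comm]

theorem lorentzForm_weightOf (h8 : r ≤ 8) {e f : Fin (r + 1) → ℤ}
    (he : lorentzForm ℤ r e (canonicalClass r) = -1)
    (hf : lorentzForm ℤ r f (canonicalClass r) = -1) :
    lorentzForm ℝ r (weightOf r e) (weightOf r f) = lorentzForm ℤ r e f - 1 / (9 - (r : ℝ)) := by
  have hd : (9 : ℝ) - r ≠ 0 := by
    have : (r : ℝ) ≤ 8 := by exact_mod_cast h8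
    linarith
  simp only [weightOf, KvecR_eq, map_add, map_smul, LinearMap.add_apply, LinearMap.smul_apply,
    smul_eq_mul, lorentzForm_intCast, lorentzForm_canonicalClass_self,
    lorentzForm_comm (canonicalClass r) f, he, hf]
  field_simp
  push_cast
  ring

theorem adjacent_weightOf (h8 : r ≤ 8) {e f : Fin (r + 1) → ℤ} (he : IsExceptional r e)
    (hf : IsExceptional r f) (hef : lorentzForm ℤ r e f = 0) :
    Adjacent r (WeightOrbit r) (weightOf r e) (weightOf r f) := by
  have hne : e ≠ f := by
    rintro rfl
    simp [he.1] at hef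
  have hφ : ∀ g, IsExceptional r g → lorentzForm ℝ r (weightOf r e + weightOf r f)
      (weightOf r g) = lorentzForm ℤ r g e + lorentzForm ℤ r g f - 2 / (9 - (r : ℝ)) := by
    intro g hg
    rw [LinearMap.map_add₂, lorentzForm_weightOf h8 he.2 hg.2, lorentzForm_weightOf h8 hf.2 hg.2,
      lorentzForm_comm e g, lorentzForm_comm f g]
    ring
  refine ⟨weightOf_injective.ne hne, isExtreme_segment_of_lt
    (φ := lorentzForm ℝ r (weightOf r e + weightOf r f)) (mem_weightOrbit_iff.2 ⟨e, he, rfl⟩)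
    (mem_weightOrbit_iff.2 ⟨f, hf, rfl⟩) ?_ ?_⟩
  · rw [hφ e he, hφ f hf, he.1, hf.1, hef, lorentzForm_comm f e, hef]
    ring
  · rintro _ hz hze hzf
    obtain ⟨g, hg, rfl⟩ := mem_weightOrbit_iff.1 hz
    have hge : (0 : ℝ) ≤ lorentzForm ℤ r g e :=
      mod_cast hg.lorentzForm_nonneg h8 he (ne_of_apply_ne _ hze)
    have hgf : (0 : ℝ) ≤ lorentzForm ℤ r g f :=
      mod_cast hg.lorentzForm_nonneg h8 hf (ne_of_apply_ne _ hzf)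
    rw [hφ e he, hφ g hg, he.1, hef]
    push_cast
    linarith

theorem not_adjacent_weightOf {e f g g' : Fin (r + 1) → ℤ} (he : IsExceptional r e)
    (hf : IsExceptional r f) (hg : IsExceptional r g) (hg' : IsExceptional r g')
    (hsum : g + g' = e + f) (hge : g ≠ e) (hgf : g ≠ f) (hef : lorentzForm ℤ r e f ≠ -1) :
    ¬ Adjacent r (WeightOrbit r) (weightOf r e) (weightOf r f) := by
  rintro ⟨-, hext⟩
  have hmem := hext.mem_segment_of_add_eq
    (subset_convexHull ℝ _ (mem_weightOrbit_iff.2 ⟨g, hg, rfl⟩))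
    (subset_convexHull ℝ _ (mem_weightOrbit_iff.2 ⟨g', hg', rfl⟩)) (by
      ext i
      have : (g i : ℝ) + g' i = e i + f i := by exact_mod_cast congrFun hsum i
      simp only [weightOf, Pi.add_apply, Function.comp_apply]
      linarith)
  rw [weightOf, weightOf, weightOf, mem_segment_translate] at hmem
  have hself : ∀ u, IsExceptional r u → lorentzForm ℝ r (Int.cast ∘ u) (Int.cast ∘ u) = -1 :=
    fun u hu => by rw [lorentzForm_intCast, hu.1]; norm_num
  have hcross : lorentzForm ℝ r (Int.cast ∘ e) (Int.cast ∘ f) +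
      lorentzForm ℝ r (Int.cast ∘ f) (Int.cast ∘ e) ≠ 2 * -1 := by
    rw [lorentzForm_intCast, lorentzForm_intCast, lorentzForm_comm f e]
    exact_mod_cast fun h => hef (by omega)
  rcases eq_or_eq_of_mem_segment_of_apply_self_eq (hself e he) (hself f hf) (hself g hg) hcross
    hmem with h | h
  · exact hge (Int.cast_injective.comp_left h)
  · exact hgf (Int.cast_injective.comp_left h)

theorem adjacent_weightOf_last_iff (h4 : 4 ≤ r) (h7 : r ≤ 7) {e : Fin (r + 1) → ℤ}
    (he : IsExceptional r e) :
    Adjacent r (WeightOrbit r) (weightOf r e) (weightOf r (Pi.single (Fin.last r) 1)) ↔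
      lorentzForm ℤ r e (Pi.single (Fin.last r) 1) = 0 := by
  set ℓ : Fin (r + 1) → ℤ := Pi.single (Fin.last r) 1
  have hℓ : IsExceptional r ℓ := isExceptional_single (by simp; omega)
  refine ⟨fun hadj => ?_, adjacent_weightOf (by omega) he hℓ⟩
  by_contra h0
  have hm : 1 ≤ lorentzForm ℤ r e ℓ := by
    have := he.lorentzForm_nonneg (by omega) hℓ fun h => hadj.1 (congrArg _ h)
    omega
  obtain ⟨f, hf, hfℓ, hef⟩ := exists_isExceptional_orthogonal_last h4 h7 he hm
  change lorentzForm ℤ r f ℓ = 0 at hfℓ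
  change _ = lorentzForm ℤ r e ℓ - 1 at hef
  refine not_adjacent_weightOf he hℓ (he.add_sub hℓ hf hfℓ hef) hf (sub_add_cancel _ _) ?_ ?_
    (by omega) hadj
  · intro h
    rw [add_sub_assoc, add_eq_left, sub_eq_zero] at h
    rw [h, hf.1] at hfℓ
    omega
  · intro h
    rw [add_sub_right_comm, add_eq_right, sub_eq_zero] at h
    rw [h] at hm
    omega

end Weights

/-- For exceptional classes `e = -(1/d)K_r + x` and `e' = -(1/d)K_r + ω`
(`x ∈ Wω`): `(e,e') = 1/d + (x,ω)`; `(e,e') = 0` iff `x` and `ω` are adjacent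
vertices of `Conv(Wω)`; and `(e,e') > 0` for all other `x ≠ ω`. -/
theorem intersection_index_of_exceptional (r : ℕ) (h4 : 4 ≤ r) (h7 : r ≤ 7)
    (x : Fin (r + 1) → ℝ) (hx : x ∈ WeightOrbit r) :
    NformR r ((-(1 / (9 - (r : ℝ)))) • KvecR r + x)
        ((-(1 / (9 - (r : ℝ)))) • KvecR r + omegaR r) =
      1 / (9 - (r : ℝ)) + NformR r x (omegaR r) ∧
    (NformR r ((-(1 / (9 - (r : ℝ)))) • KvecR r + x)
        ((-(1 / (9 - (r : ℝ)))) • KvecR r + omegaR r) = 0 ↔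
      Adjacent r (WeightOrbit r) x (omegaR r)) ∧
    (x ≠ omegaR r → ¬ Adjacent r (WeightOrbit r) x (omegaR r) →
      0 < NformR r ((-(1 / (9 - (r : ℝ)))) • KvecR r + x)
        ((-(1 / (9 - (r : ℝ)))) • KvecR r + omegaR r)) := by
  obtain ⟨e, he, rfl⟩ := mem_weightOrbit_iff.1 hx
  have hℓ : IsExceptional r (Pi.single (Fin.last r) 1) := isExceptional_single (by simp; omega)
  simp only [omegaR_eq, neg_smul_add_weightOf, NformR_eq, lorentzForm_intCast,
    lorentzForm_weightOf (by omega) he.2 hℓ.2, adjacent_weightOf_last_iff h4 h7 he]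
  refine ⟨by ring, by norm_cast, fun hne h0 => ?_⟩
  have := he.lorentzForm_nonneg (by omega) hℓ fun h => hne (congrArg _ h)
  exact_mod_cast this.lt_of_ne (Ne.symm h0)
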